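/- If a finite group G has minimal number of generators equal to 2, then its determining number equals 2. -/

import Mathlib

/-!
A generating set is determining, so `α(G) ≤ γ(G) = 2`. If a set `{a}` were determining, every
inner automorphism would fix `a` and hence be trivial, so `G` would be abelian; it is not cyclic
since `γ(G) = 2`. In a finite noncyclic abelian group there is a prime `p` with `p ∣ [G : ⟨a⟩]` and
`p² ∣ |G|`. A nontrivial `L : G → ℤ/p` vanishing on `a` then has `p ∣ |ker L|`, so `ker L` contains
an element `t` of order `p`, and `x ↦ x · t ^ L(x)` is a nontrivial automorphism fixing `a`.
-/

/-- A subset `D` of a group `G` is a determining set if the only automorphism of `G`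
fixing every element of `D` is the identity. -/
def IsDetermining {G : Type*} [Group G] (D : Set G) : Prop :=
  ∀ φ : G ≃* G, (∀ x ∈ D, φ x = x) → φ = MulEquiv.refl G

/-- The determining number: the minimum size of a (finite) determining set. -/
noncomputable def detNumber (G : Type*) [Group G] : ℕ :=
  sInf {n | ∃ D : Finset G, D.card = n ∧ IsDetermining (D : Set G)}

/-- The generating number: the minimum size of a (finite) generating set. -/
noncomputable def genNumber (G : Type*) [Group G] : ℕ :=
  sInf {n | ∃ D : Finset G, D.card = n ∧ Subgroup.closure (D : Set G) = ⊤}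

open Subgroup

section Transvection

variable {G : Type*} [CommGroup G]

def MulEquiv.transvection (f : G →* G) (hf : ∀ x, f (f x) = 1) : G ≃* G where
  toFun x := x * f x
  invFun x := x * (f x)⁻¹
  left_inv x := by simp [hf]
  right_inv x := by simp [hf]
  map_mul' x y := by simp only [map_mul]; exact mul_mul_mul_comm x y (f x) (f y)

@[simp]
lemma MulEquiv.transvection_apply (f : G →* G) (hf : ∀ x, f (f x) = 1) (x : G) :
    transvection f hf x = x * f x :=
  rfl

lemma MulEquiv.transvection_eq_refl_iff (f : G →* G) (hf : ∀ x, f (f x) = 1) :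
    transvection f hf = MulEquiv.refl G ↔ f = 1 := by
  simp [MulEquiv.ext_iff, MonoidHom.ext_iff]

end Transvection

lemma exists_prime_dvd_index_zpowers_sq_dvd_card {G : Type*} [CommGroup G] [Finite G]
    (hG : ¬ IsCyclic G) (a : G) :
    ∃ p, p.Prime ∧ p ∣ (zpowers a).index ∧ p ^ 2 ∣ Nat.card G := by
  by_contra! h
  -- Then `[G : ⟨a⟩]` is squarefree and coprime to `orderOf a`, so `|G|` divides the exponent.
  set m := (zpowers a).index
  have hcard : Nat.card G = orderOf a * m := by rw [← Nat.card_zpowers, card_mul_index]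
  have hsq : Squarefree m := Nat.squarefree_iff_prime_squarefree.2 fun p hp hpp =>
    h p hp (dvd_of_mul_left_dvd hpp) (by rw [hcard, sq]; exact dvd_mul_of_dvd_right hpp _)
  have hcop : Nat.Coprime (orderOf a) m := Nat.coprime_of_dvd fun p hp hpa hpm =>
    h p hp hpm (by rw [hcard, sq]; exact mul_dvd_mul hpa hpm)
  have hexp : Monoid.exponent G ≠ 0 := Monoid.exponent_ne_zero_of_finite
  have hm : m ∣ Monoid.exponent G := by
    rw [← Nat.prod_primeFactors_of_squarefree hsq, Nat.prod_primeFactors_dvd_iff hexp]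
    intro p hp
    have hp' := Nat.prime_of_mem_primeFactors hp
    have := Fact.mk hp'
    obtain ⟨g, hg⟩ := exists_prime_orderOf_dvd_card' (G := G) p
      (hcard ▸ dvd_mul_of_dvd_right (Nat.dvd_of_mem_primeFactors hp) _)
    exact Nat.mem_primeFactors.2 ⟨hp', hg ▸ Monoid.order_dvd_exponent g, hexp⟩
  refine hG (IsCyclic.of_exponent_eq_card (Nat.dvd_antisymm Group.exponent_dvd_nat_card ?_))
  rw [hcard]
  exact hcop.mul_dvd_of_dvd_of_dvd (Monoid.order_dvd_exponent a) hm

lemma exists_monoidHom_zmod_ne_one {Q : Type*} [CommGroup Q] [Finite Q] (p : ℕ) [Fact p.Prime]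
    (hp : p ∣ Nat.card Q) : ∃ L : Q →* Multiplicative (ZMod p), L ≠ 1 := by
  set P := (powMonoidHom p : Q →* Q).range
  -- `Q ⧸ Qᵖ` is a `ZMod p`-vector space, nonzero because by Cauchy `x ↦ xᵖ` is not injective.
  have : Module (ZMod p) (Additive (Q ⧸ P)) := AddCommGroup.zmodModule fun v => by
    induction v using QuotientGroup.induction_on with
    | H q => exact congrArg Additive.ofMul ((QuotientGroup.eq_one_iff _).2 ⟨q, rfl⟩)
  obtain ⟨v, hv⟩ : ∃ v : Additive (Q ⧸ P), v ≠ 0 := by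
    by_contra! h
    have hsurj : Function.Surjective (powMonoidHom p : Q →* Q) := fun q =>
      (QuotientGroup.eq_one_iff q).1 (congrArg Additive.toMul (h (.ofMul q)))
    obtain ⟨x, hx⟩ := exists_prime_orderOf_dvd_card' p hp
    have : x = 1 := Finite.injective_iff_surjective.2 hsurj (by simp [← hx, pow_orderOf_eq_one])
    exact (Fact.out : p.Prime).ne_one (hx ▸ this ▸ orderOf_one)
  obtain ⟨ℓ, hℓ⟩ : ∃ ℓ : Additive (Q ⧸ P) →ₗ[ZMod p] ZMod p, ℓ v ≠ 0 := by
    by_contra! h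
    exact hv ((Module.forall_dual_apply_eq_zero_iff _ v).1 h)
  refine ⟨(AddMonoidHom.toMultiplicativeRight ℓ.toAddMonoidHom).comp (QuotientGroup.mk' P),
    fun hL => hℓ ?_⟩
  obtain ⟨q, hq⟩ := QuotientGroup.mk'_surjective P v.toMul
  rw [← ofMul_toMul v, ← hq]
  exact congrArg Multiplicative.toAdd (DFunLike.congr_fun hL q)

lemma Nat.card_multiplicative_zmod (n : ℕ) : Nat.card (Multiplicative (ZMod n)) = n :=
  (Nat.card_congr Multiplicative.toAdd).trans (Nat.card_zmod n)

lemma prime_dvd_card_ker_of_sq_dvd_card {G : Type*} [Group G] {p : ℕ} (hp : p.Prime)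
    (L : G →* Multiplicative (ZMod p)) (h : p ^ 2 ∣ Nat.card G) : p ∣ Nat.card L.ker := by
  have hrange : Nat.card L.range ∣ p := by
    simpa only [Nat.card_multiplicative_zmod] using L.range.card_subgroup_dvd_card
  refine Nat.dvd_of_mul_dvd_mul_right hp.pos ?_
  calc p * p = p ^ 2 := (sq p).symm
    _ ∣ Nat.card L.ker * Nat.card L.range := by rwa [← index_ker, card_mul_index]
    _ ∣ Nat.card L.ker * p := mul_dvd_mul_left _ hrange

lemma exists_mulEquiv_ne_refl_fixing {G : Type*} [CommGroup G] [Finite G] (hG : ¬ IsCyclic G)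
    (a : G) : ∃ φ : G ≃* G, φ ≠ MulEquiv.refl G ∧ φ a = a := by
  obtain ⟨p, hp, hpa, hpG⟩ := exists_prime_dvd_index_zpowers_sq_dvd_card hG a
  have := Fact.mk hp
  obtain ⟨L₀, hL₀⟩ := exists_monoidHom_zmod_ne_one p hpa
  set L := L₀.comp (QuotientGroup.mk' (zpowers a))
  have hLa : L a = 1 := by simp [L, (QuotientGroup.eq_one_iff a).2 (mem_zpowers a)]
  have hL : L ≠ 1 := fun h => hL₀ <| (MonoidHom.cancel_right (QuotientGroup.mk'_surjective _)).1
    (h.trans (MonoidHom.one_comp _).symm)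
  obtain ⟨t, ht⟩ := exists_prime_orderOf_dvd_card' p (prime_dvd_card_ker_of_sq_dvd_card hp L hpG)
  have hcard : Nat.card (Multiplicative (ZMod p)) = Nat.card (zpowers t) := by
    rw [Nat.card_zpowers, ht, Nat.card_multiplicative_zmod]
  let ι₀ : Multiplicative (ZMod p) →* L.ker :=
    (zpowers t).subtype.comp (mulEquivOfCyclicCardEq hcard).toMonoidHom
  let ι := L.ker.subtype.comp ι₀
  have hι : Function.Injective ι := by
    simpa [ι, ι₀] using (mulEquivOfCyclicCardEq hcard).injective
  have hLι : ∀ y, L (ι y) = 1 := fun y => (ι₀ y).2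
  refine ⟨MulEquiv.transvection (ι.comp L) (fun x => by simp [hLι]), ?_, by simp [hLa]⟩
  rw [Ne, MulEquiv.transvection_eq_refl_iff]
  intro h
  exact hL (MonoidHom.ext fun x => hι (by simpa using DFunLike.congr_fun h x))

namespace IsDetermining

variable {G : Type*} [Group G]

lemma mono {D E : Set G} (hD : IsDetermining D) (hDE : D ⊆ E) : IsDetermining E :=
  fun φ hφ => hD φ fun x hx => hφ x (hDE hx)

lemma of_closure_eq_top {D : Set G} (hD : closure D = ⊤) : IsDetermining D := fun _ hφ =>
  MulEquiv.toMonoidHom_injective (MonoidHom.eq_of_eqOn_dense hD hφ)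

lemma commute_of_singleton {a : G} (h : IsDetermining ({a} : Set G)) (x y : G) :
    Commute x y := by
  -- Conjugation by `a` fixes `a`, so `a` is central; then every conjugation fixes `a`.
  have hconj : ∀ g, g * a = a * g → MulAut.conj g = MulEquiv.refl G := fun g hg =>
    h _ fun x hx => by rw [hx, MulAut.conj_apply, hg, mul_inv_cancel_right]
  have hcentral : ∀ g, g * a = a * g := fun g =>
    (mul_inv_eq_iff_eq_mul.1 (DFunLike.congr_fun (hconj a rfl) g)).symm
  exact mul_inv_eq_iff_eq_mul.1 (DFunLike.congr_fun (hconj x (hcentral x)) y)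

end IsDetermining

lemma not_isDetermining_of_card_le_one {G : Type*} [Group G] [Finite G] (hG : ¬ IsCyclic G)
    (D : Finset G) (hD : D.card ≤ 1) : ¬ IsDetermining (D : Set G) := by
  intro hdet
  obtain ⟨a, haD⟩ := Finset.card_le_one_iff_subset_singleton.1 hD
  have ha : IsDetermining ({a} : Set G) :=
    hdet.mono ((Finset.coe_subset.2 haD).trans_eq (Finset.coe_singleton a))
  let : CommGroup G := { mul_comm := fun x y => (ha.commute_of_singleton x y).eq }
  obtain ⟨φ, hφ, hφa⟩ := exists_mulEquiv_ne_refl_fixing hG a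
  exact hφ (ha φ (by simpa using hφa))

lemma exists_isDetermining_card_eq_detNumber (G : Type*) [Group G] [Finite G] :
    ∃ D : Finset G, D.card = detNumber G ∧ IsDetermining (D : Set G) := by
  have := Fintype.ofFinite G
  exact Nat.sInf_mem (s := {n | ∃ D : Finset G, D.card = n ∧ IsDetermining (D : Set G)})
    ⟨_, Finset.univ, rfl, .of_closure_eq_top (by simp)⟩

lemma detNumber_le_genNumber (G : Type*) [Group G] [Finite G] : detNumber G ≤ genNumber G := by
  have := Fintype.ofFinite G
  obtain ⟨D, hD, hgen⟩ : ∃ D : Finset G, D.card = genNumber G ∧ closure (D : Set G) = ⊤ :=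
    Nat.sInf_mem (s := {n | ∃ D : Finset G, D.card = n ∧ closure (D : Set G) = ⊤})
      ⟨_, Finset.univ, rfl, by simp⟩
  exact Nat.sInf_le ⟨D, hD, .of_closure_eq_top hgen⟩

lemma genNumber_le_one_of_isCyclic (G : Type*) [Group G] [IsCyclic G] : genNumber G ≤ 1 := by
  obtain ⟨g, hg⟩ := IsCyclic.exists_generator (α := G)
  refine Nat.sInf_le ⟨{g}, Finset.card_singleton g, ?_⟩
  rw [Finset.coe_singleton, ← zpowers_eq_closure, eq_top_iff']
  exact hg

lemma two_le_detNumber {G : Type*} [Group G] [Finite G] (hG : ¬ IsCyclic G) :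
    2 ≤ detNumber G := by
  obtain ⟨D, hcard, hD⟩ := exists_isDetermining_card_eq_detNumber G
  by_contra! h
  exact not_isDetermining_of_card_le_one hG D (by omega) hD

theorem stmt13 {G : Type*} [Group G] [Finite G] (h : genNumber G = 2) :
    detNumber G = 2 := by
  have hG : ¬ IsCyclic G := fun _ => by
    have := genNumber_le_one_of_isCyclic G
    omega
  exact le_antisymm (h ▸ detNumber_le_genNumber G) (two_le_detNumber hG)
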